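/- Let d ≥ 2, M ≤ d, and κ(t) = (1/(2πd))·((π − arccos t)·t + √(1 − t²)). Let W ∈ ℝ^{m×d} have nonnegative entries supported in the first M coordinates, and let {1, …, m} be partitioned into I_c = I₁ ∪ … ∪ I_M and I_r such that: (i) for each j and each i ∈ I_j, w_i = c_i e_j with c_i > 0 and Σ_{i∈I_j} c_i = γ; (ii) each row w_i with i ∈ I_r has at most two nonzero entries and Σ_{i∈I_r} Σ_j w_{i,j} = M(1−γ). Then Σ_{i=1}^m Σ_{j=1}^M ‖w_i‖·κ(⟨ŵ_i, e_j⟩) ≥ M·γ·κ(1) + M(M−1)·γ·κ(0) + (√2/2)·M²·(1−γ)·κ(0), where terms with w_i = 0 are interpreted as 0. -/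

import Mathlib

open Real
open scoped RealInnerProductSpace

/-- `κ(t) = (1/(2πd))·((π − arccos t)·t + √(1 − t²))`. -/
noncomputable def kappa (d : ℕ) (t : ℝ) : ℝ :=
  (1 / (2 * π * d)) * ((π - Real.arccos t) * t + Real.sqrt (1 - t ^ 2))

lemma kappa_zero (d : ℕ) : kappa d 0 = 1 / (2 * π * d) := by
  simp [kappa]

lemma kappa_ge_kappa_zero (d : ℕ) {t : ℝ} (h0 : 0 ≤ t) (h1 : t ≤ 1) :
    kappa d 0 ≤ kappa d t := by
  rw [kappa_zero, kappa]
  have hc : 0 ≤ 1 / (2 * π * (d : ℝ)) := by positivity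
  have harc : Real.arccos t ≤ π / 2 := Real.arccos_le_pi_div_two.2 h0
  have ht2 : (0:ℝ) ≤ 1 - t ^ 2 := by nlinarith
  have h2 : 1 - t ^ 2 ≤ Real.sqrt (1 - t ^ 2) := by
    nlinarith [Real.sq_sqrt ht2, Real.sqrt_nonneg (1 - t ^ 2),
      Real.sqrt_le_one.mpr (show 1 - t ^ 2 ≤ 1 by nlinarith)]
  have hpi : (3:ℝ) < π := Real.pi_gt_three
  have hkey : 1 ≤ (π - Real.arccos t) * t + Real.sqrt (1 - t ^ 2) := by
    nlinarith [mul_le_mul_of_nonneg_right harc h0]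
  calc 1 / (2 * π * (d:ℝ)) = 1 / (2 * π * (d:ℝ)) * 1 := by ring
    _ ≤ _ := mul_le_mul_of_nonneg_left hkey hc

lemma coord_le_norm {d : ℕ} (w : EuclideanSpace ℝ (Fin d)) (j : Fin d) :
    w j ≤ ‖w‖ := by
  have h1 : w j ^ 2 ≤ ∑ k, ‖w k‖ ^ 2 := by
    have := Finset.single_le_sum (f := fun k => ‖w k‖ ^ 2)
      (fun k _ => by positivity) (Finset.mem_univ j)
    simpa [sq_abs] using this
  calc w j ≤ |w j| := le_abs_self _
    _ = Real.sqrt (w j ^ 2) := (Real.sqrt_sq_eq_abs _).symm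
    _ ≤ Real.sqrt (∑ k, ‖w k‖ ^ 2) := Real.sqrt_le_sqrt h1
    _ = ‖w‖ := (EuclideanSpace.norm_eq w).symm

lemma l1_le_sqrt_two_mul_norm {d : ℕ} (w : EuclideanSpace ℝ (Fin d))
    (hpos : ∀ j, 0 ≤ w j)
    (hcard : (Finset.univ.filter fun j => w j ≠ 0).card ≤ 2) :
    ∑ j, w j ≤ Real.sqrt 2 * ‖w‖ := by
  classical
  set S := Finset.univ.filter fun j => w j ≠ 0 with hS
  have h1 : ∑ j, w j = ∑ j ∈ S, w j := (Finset.sum_filter_ne_zero _).symm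
  have h2 : (∑ j ∈ S, w j) ^ 2 ≤ (S.card : ℝ) * ∑ j ∈ S, (w j) ^ 2 := by
    exact_mod_cast sq_sum_le_card_mul_sum_sq (s := S) (f := fun j => w j)
  have h3 : ∑ j ∈ S, (w j) ^ 2 ≤ ∑ j, (w j) ^ 2 :=
    Finset.sum_le_sum_of_subset_of_nonneg (Finset.filter_subset _ _)
      (fun _ _ _ => by positivity)
  have h4 : ‖w‖ ^ 2 = ∑ j, (w j) ^ 2 := by
    rw [EuclideanSpace.norm_eq, Real.sq_sqrt (by positivity)]
    simp [Real.norm_eq_abs, sq_abs]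
  have hcard' : (S.card : ℝ) ≤ 2 := by exact_mod_cast hcard
  have hsumnn : 0 ≤ ∑ j ∈ S, (w j) ^ 2 := by positivity
  have h5 : (∑ j, w j) ^ 2 ≤ 2 * ‖w‖ ^ 2 := by
    rw [h1, h4]
    nlinarith
  have hsum0 : 0 ≤ ∑ j, w j := Finset.sum_nonneg fun j _ => hpos j
  have hb : 0 ≤ Real.sqrt 2 * ‖w‖ := by positivity
  have h6 : (∑ j, w j) ^ 2 ≤ (Real.sqrt 2 * ‖w‖) ^ 2 := by
    rw [mul_pow, Real.sq_sqrt (show (0:ℝ) ≤ 2 by norm_num)]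
    exact h5
  calc ∑ j, w j = Real.sqrt ((∑ j, w j) ^ 2) := (Real.sqrt_sq hsum0).symm
    _ ≤ Real.sqrt ((Real.sqrt 2 * ‖w‖) ^ 2) := Real.sqrt_le_sqrt h6
    _ = Real.sqrt 2 * ‖w‖ := Real.sqrt_sq hb

theorem cross_term_lower_bound (m d M : ℕ) (hd : 2 ≤ d) (hMd : M ≤ d)
    (W : Fin m → EuclideanSpace ℝ (Fin d))
    (hnonneg : ∀ i j, 0 ≤ W i j)
    (hsupp : ∀ (i : Fin m) (j : Fin d), M ≤ (j : ℕ) → W i j = 0)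
    (I : Fin M → Finset (Fin m)) (Ir : Finset (Fin m))
    (hdisj : ∀ j j' : Fin M, j ≠ j' → Disjoint (I j) (I j'))
    (hdisj' : Disjoint (Finset.univ.biUnion I) Ir)
    (hpart : Finset.univ.biUnion I ∪ Ir = Finset.univ)
    (γ : ℝ)
    (hrow : ∀ j : Fin M, ∀ i ∈ I j, ∃ c : ℝ, 0 < c ∧
      W i = c • EuclideanSpace.single (Fin.castLE hMd j) (1 : ℝ))
    (hγ : ∀ j : Fin M, ∑ i ∈ I j, W i (Fin.castLE hMd j) = γ)
    (hsparse : ∀ i ∈ Ir, (Finset.univ.filter fun j => W i j ≠ 0).card ≤ 2)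
    (hres : ∑ i ∈ Ir, ∑ j, W i j = M * (1 - γ)) :
    ∑ i : Fin m, ∑ j : Fin M,
        ‖W i‖ * kappa d ⟪‖W i‖⁻¹ • W i,
          EuclideanSpace.single (Fin.castLE hMd j) (1 : ℝ)⟫
      ≥ M * γ * kappa d 1 + M * (M - 1) * γ * kappa d 0
          + Real.sqrt 2 / 2 * M ^ 2 * (1 - γ) * kappa d 0 := by
  classical
  set f : Fin m → ℝ := fun i => ∑ j : Fin M,
      ‖W i‖ * kappa d ⟪‖W i‖⁻¹ • W i,
        EuclideanSpace.single (Fin.castLE hMd j) (1 : ℝ)⟫ with hf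
  have hsplit : ∑ i : Fin m, f i
      = (∑ j : Fin M, ∑ i ∈ I j, f i) + ∑ i ∈ Ir, f i := by
    rw [← hpart, Finset.sum_union hdisj',
      Finset.sum_biUnion (fun j _ j' _ h => hdisj j j' h)]
  -- inner product computation
  have hinner : ∀ (x : EuclideanSpace ℝ (Fin d)) (j : Fin d),
      ⟪x, EuclideanSpace.single j (1 : ℝ)⟫ = x j := by
    intro x j
    simp [EuclideanSpace.inner_single_right]
  -- Part A : structured rows
  have hA : ∀ j : Fin M, ∀ i ∈ I j,
      f i = W i (Fin.castLE hMd j) *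
        (kappa d 1 + ((M : ℝ) - 1) * kappa d 0) := by
    intro j i hi
    obtain ⟨c, hc, hW⟩ := hrow j i hi
    have hnorm : ‖W i‖ = c := by
      rw [hW, norm_smul, EuclideanSpace.norm_single]
      simp [abs_of_pos hc]
    have hhat : ‖W i‖⁻¹ • W i
        = EuclideanSpace.single (Fin.castLE hMd j) (1 : ℝ) := by
      rw [hnorm, hW, smul_smul, inv_mul_cancel₀ (ne_of_gt hc), one_smul]
    have hval : W i (Fin.castLE hMd j) = c := by
      rw [hW]; simp [EuclideanSpace.single_apply]
    have hterm : ∀ j' : Fin M,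
        (EuclideanSpace.single (Fin.castLE hMd j) (1:ℝ)) (Fin.castLE hMd j')
          = if j' = j then (1:ℝ) else 0 := by
      intro j'
      rw [EuclideanSpace.single_apply]
      congr 1
      simp [Fin.castLE_inj]
    have hsum : ∑ j' : Fin M, kappa d
          ((EuclideanSpace.single (Fin.castLE hMd j) (1:ℝ)) (Fin.castLE hMd j'))
        = kappa d 1 + ((M : ℝ) - 1) * kappa d 0 := by
      calc ∑ j' : Fin M, kappa d
            ((EuclideanSpace.single (Fin.castLE hMd j) (1:ℝ)) (Fin.castLE hMd j'))
          = ∑ j' : Fin M, (if j' = j then kappa d 1 else kappa d 0) := by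
            refine Finset.sum_congr rfl fun j' _ => ?_
            rw [hterm j', apply_ite (kappa d)]
        _ = kappa d 1 + ((M : ℝ) - 1) * kappa d 0 := by
            rw [← Finset.add_sum_erase _ _ (Finset.mem_univ j), if_pos rfl]
            congr 1
            rw [Finset.sum_congr rfl
              (fun x hx => if_neg (Finset.ne_of_mem_erase hx)),
              Finset.sum_const, Finset.card_erase_of_mem (Finset.mem_univ j),
              Finset.card_univ, Fintype.card_fin, nsmul_eq_mul]
            have hM1 : 1 ≤ M := j.pos
            rw [Nat.cast_sub hM1]
            norm_num
    have hfi : f i = ∑ j' : Fin M, c * kappa d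
        ((EuclideanSpace.single (Fin.castLE hMd j) (1:ℝ)) (Fin.castLE hMd j')) := by
      rw [hf]
      exact Finset.sum_congr rfl fun j' _ => by rw [hinner, hhat, hnorm]
    rw [hfi, ← Finset.mul_sum, hsum, hval]
  have hAsum : ∑ j : Fin M, ∑ i ∈ I j, f i
      = (M : ℝ) * γ * kappa d 1 + (M : ℝ) * ((M : ℝ) - 1) * γ * kappa d 0 := by
    have : ∀ j : Fin M, ∑ i ∈ I j, f i
        = γ * (kappa d 1 + ((M : ℝ) - 1) * kappa d 0) := by
      intro j
      rw [Finset.sum_congr rfl (hA j), ← Finset.sum_mul, hγ j]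
    rw [Finset.sum_congr rfl fun j _ => this j, Finset.sum_const,
      Finset.card_univ, Fintype.card_fin, nsmul_eq_mul]
    ring
  -- Part C : residual rows
  have hk0 : 0 ≤ kappa d 0 := by
    rw [kappa_zero]; positivity
  have hC : ∀ i ∈ Ir, f i ≥ Real.sqrt 2 / 2 * kappa d 0 * M * ∑ j, W i j := by
    intro i hi
    have hl1 : ∑ j, W i j ≤ Real.sqrt 2 * ‖W i‖ :=
      l1_le_sqrt_two_mul_norm (W i) (hnonneg i) (hsparse i hi)
    have hterm : ∀ j : Fin M,
        ‖W i‖ * kappa d ⟪‖W i‖⁻¹ • W i,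
          EuclideanSpace.single (Fin.castLE hMd j) (1 : ℝ)⟫
        ≥ ‖W i‖ * kappa d 0 := by
      intro j
      rw [hinner]
      have hx : (‖W i‖⁻¹ • W i) (Fin.castLE hMd j)
          = ‖W i‖⁻¹ * W i (Fin.castLE hMd j) := rfl
      rw [hx]
      refine mul_le_mul_of_nonneg_left ?_ (norm_nonneg _)
      apply kappa_ge_kappa_zero
      · exact mul_nonneg (by positivity) (hnonneg i _)
      · rcases eq_or_lt_of_le (norm_nonneg (W i)) with h | h
        · rw [← h]; simp
        · rw [inv_mul_le_iff₀ h, mul_one]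
          exact coord_le_norm (W i) _
    have h1 : f i ≥ (M : ℝ) * (‖W i‖ * kappa d 0) := by
      rw [hf]
      calc ∑ j : Fin M, ‖W i‖ * kappa d ⟪‖W i‖⁻¹ • W i,
            EuclideanSpace.single (Fin.castLE hMd j) (1 : ℝ)⟫
          ≥ ∑ _j : Fin M, ‖W i‖ * kappa d 0 :=
            Finset.sum_le_sum fun j _ => hterm j
        _ = (M : ℝ) * (‖W i‖ * kappa d 0) := by
            rw [Finset.sum_const, Finset.card_univ, Fintype.card_fin,
              nsmul_eq_mul]
    have h2 : Real.sqrt 2 / 2 * ∑ j, W i j ≤ ‖W i‖ := by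
      have hs2 : Real.sqrt 2 * Real.sqrt 2 = 2 :=
        Real.mul_self_sqrt (by norm_num)
      have h2a : Real.sqrt 2 / 2 * ∑ j, W i j
          ≤ Real.sqrt 2 / 2 * (Real.sqrt 2 * ‖W i‖) :=
        mul_le_mul_of_nonneg_left hl1 (by positivity)
      have h2b : Real.sqrt 2 / 2 * (Real.sqrt 2 * ‖W i‖) = ‖W i‖ := by
        rw [show Real.sqrt 2 / 2 * (Real.sqrt 2 * ‖W i‖)
            = Real.sqrt 2 * Real.sqrt 2 * ‖W i‖ / 2 by ring, hs2]
        ring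
      linarith
    calc f i ≥ (M : ℝ) * (‖W i‖ * kappa d 0) := h1
      _ ≥ (M : ℝ) * ((Real.sqrt 2 / 2 * ∑ j, W i j) * kappa d 0) := by
          refine mul_le_mul_of_nonneg_left
            (mul_le_mul_of_nonneg_right h2 hk0) (by positivity)
      _ = Real.sqrt 2 / 2 * kappa d 0 * M * ∑ j, W i j := by ring
  have hCsum : ∑ i ∈ Ir, f i
      ≥ Real.sqrt 2 / 2 * (M : ℝ) ^ 2 * (1 - γ) * kappa d 0 := by
    calc ∑ i ∈ Ir, f i
        ≥ ∑ i ∈ Ir, Real.sqrt 2 / 2 * kappa d 0 * M * ∑ j, W i j :=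
          Finset.sum_le_sum hC
      _ = Real.sqrt 2 / 2 * kappa d 0 * M * ∑ i ∈ Ir, ∑ j, W i j := by
          rw [Finset.mul_sum]
      _ = Real.sqrt 2 / 2 * (M : ℝ) ^ 2 * (1 - γ) * kappa d 0 := by
          rw [hres]; ring
  rw [hsplit, hAsum]
  exact add_le_add_right hCsum _
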